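/- arXiv:2312.16485 — 3 statements merged into one kernel-verified Lean document; each statement's English description precedes it below -/
import Mathlib

section
/- For 1 < α < 2 the tail sums z_r := 2·∑_{k=r+1}^∞ g_k of the Grünwald–Letnikov coefficients are well-defined (the series converges) and positive for every r ≥ 1. -/
/-- Grünwald–Letnikov coefficients: g 0 = 1, g (k+1) = -((α - k)/(k+1)) * g k. -/
noncomputable def glCoeff (α : ℝ) : ℕ → ℝ
  | 0 => 1
  | k + 1 => -((α - k) / (k + 1)) * glCoeff α k

/-- Auxiliary sequence: partial sums of glCoeff. -/
noncomputable def glH (α : ℝ) : ℕ → ℝ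
  | 0 => 1
  | n + 1 => -((α - 1 - n) / (n + 1)) * glH α n

lemma glCoeff_eq_H (α : ℝ) (n : ℕ) :
    glCoeff α (n + 1) = (-α / (n + 1)) * glH α n := by
  induction n with
  | zero => simp [glCoeff, glH]
  | succ n ih =>
    have h1 : (n : ℝ) + 1 ≠ 0 := by positivity
    have h2 : (n : ℝ) + 2 ≠ 0 := by positivity
    show -((α - (n+1 : ℕ)) / ((n+1 : ℕ) + 1)) * glCoeff α (n + 1) = _
    rw [ih]
    show _ = (-α / ((n+1 : ℕ) + 1)) * (-((α - 1 - n) / (n + 1)) * glH α n)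
    push_cast
    field_simp
    ring

lemma sum_glCoeff (α : ℝ) (n : ℕ) :
    ∑ k ∈ Finset.range (n + 1), glCoeff α k = glH α n := by
  induction n with
  | zero => simp [glCoeff, glH]
  | succ n ih =>
    rw [Finset.sum_range_succ, ih, glCoeff_eq_H]
    have h1 : (n : ℝ) + 1 ≠ 0 := by positivity
    show _ = -((α - 1 - n) / (n + 1)) * glH α n
    field_simp
    ring

lemma glH_neg (α : ℝ) (hα1 : 1 < α) (hα2 : α < 2) (n : ℕ) (hn : 1 ≤ n) :
    glH α n < 0 := by
  induction n with
  | zero => omega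
  | succ n ih =>
    rcases Nat.eq_or_lt_of_le hn with h | h
    · have : n = 0 := by omega
      subst this
      have h0 : glH α 1 = -(α - 1) := by
        show -((α - 1 - (0:ℕ)) / ((0:ℕ) + 1)) * glH α 0 = _
        simp [glH]
      rw [h0]
      linarith
    · have hn1 : 1 ≤ n := by omega
      have ihn := ih hn1
      show -((α - 1 - n) / (n + 1)) * glH α n < 0
      have hc : 0 < -((α - 1 - (n:ℝ)) / (n + 1)) := by
        have hn' : (1:ℝ) ≤ n := by exact_mod_cast hn1
        have : α - 1 - (n:ℝ) < 0 := by linarith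
        have : (α - 1 - (n:ℝ)) / (n + 1) < 0 := div_neg_of_neg_of_pos this (by positivity)
        linarith
      nlinarith

lemma glCoeff_pos (α : ℝ) (hα1 : 1 < α) (hα2 : α < 2) (n : ℕ) (hn : 1 ≤ n) :
    0 < glCoeff α (n + 1) := by
  rw [glCoeff_eq_H]
  have h := glH_neg α hα1 hα2 n hn
  have hpos : 0 < (n:ℝ) + 1 := by positivity
  have : -α / ((n:ℝ) + 1) < 0 := div_neg_of_neg_of_pos (by linarith) hpos
  nlinarith

theorem gl_tail_pos (α : ℝ) (hα1 : 1 < α) (hα2 : α < 2) (r : ℕ) (hr : 1 ≤ r) :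
    Summable (fun k : ℕ => glCoeff α (r + 1 + k)) ∧
    0 < 2 * ∑' k : ℕ, glCoeff α (r + 1 + k) := by
  have hnonneg : ∀ k : ℕ, 0 ≤ glCoeff α (r + 1 + k) := by
    intro k
    have : r + 1 + k = (r + k) + 1 := by omega
    rw [this]
    exact le_of_lt (glCoeff_pos α hα1 hα2 (r + k) (by omega))
  have hsum : Summable (fun k : ℕ => glCoeff α (r + 1 + k)) := by
    apply summable_of_sum_range_le hnonneg (c := -glH α r)
    intro n
    have key : ∑ k ∈ Finset.range n, glCoeff α (r + 1 + k)
        = ∑ k ∈ Finset.range (r + 1 + n), glCoeff α k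
          - ∑ k ∈ Finset.range (r + 1), glCoeff α k := by
      rw [Finset.sum_range_add]
      ring
    rw [key, sum_glCoeff]
    cases n with
    | zero =>
      simp [sum_glCoeff α r]
      have := glH_neg α hα1 hα2 r hr
      linarith [sum_glCoeff α r ▸ this]
    | succ n =>
      have h1 : r + 1 + (n + 1) = (r + n + 1) + 1 := by omega
      rw [h1, sum_glCoeff]
      have := glH_neg α hα1 hα2 (r + n + 1) (by omega)
      linarith
  refine ⟨hsum, ?_⟩
  have hpos0 : 0 < glCoeff α (r + 1 + 0) := by
    simpa using glCoeff_pos α hα1 hα2 r hr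
  have := Summable.tsum_pos hsum hnonneg 0 hpos0
  linarith
end

section
/- For 1 < α < 2 and every r ≥ 1, the partial sum G_r := ∑_{k=0}^{r} g_k of the Grünwald–Letnikov coefficients is negative. -/
lemma gl_mul (α : ℝ) (r : ℕ) :
    (α - r) * glCoeff α r = α * glCoeff (α - 1) r := by
  induction r with
  | zero => simp [glCoeff]
  | succ n ih =>
    have hn : (n : ℝ) + 1 ≠ 0 := by positivity
    simp only [glCoeff]
    push_cast
    field_simp
    linear_combination (-(α - ↑n - 1)) * ih

lemma gl_sum (α : ℝ) (r : ℕ) :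
    ∑ k ∈ Finset.range (r + 1), glCoeff α k = glCoeff (α - 1) r := by
  induction r with
  | zero => simp [glCoeff]
  | succ n ih =>
    rw [Finset.sum_range_succ, ih]
    have h := gl_mul α n
    have hn : (n : ℝ) + 1 ≠ 0 := by positivity
    show glCoeff (α - 1) n + glCoeff α (n + 1) = glCoeff (α - 1) (n + 1)
    simp only [glCoeff]
    field_simp
    linear_combination -h

lemma gl_neg (α : ℝ) (h1 : 0 < α) (h2 : α < 1) (r : ℕ) (hr : 1 ≤ r) :
    glCoeff α r < 0 := by
  induction r, hr using Nat.le_induction with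
  | base => simp [glCoeff]; linarith
  | succ n hn ih =>
    show -((α - n) / (n + 1)) * glCoeff α n < 0
    have h1n : (1 : ℝ) ≤ n := by exact_mod_cast hn
    have hpos : 0 < -((α - n) / (n + 1)) := by
      rw [neg_div', neg_sub]
      apply div_pos (by linarith) (by positivity)
    exact mul_neg_of_pos_of_neg hpos ih

theorem gl_partial_sum_neg (α : ℝ) (hα1 : 1 < α) (hα2 : α < 2) (r : ℕ) (hr : 1 ≤ r) :
    ∑ k ∈ Finset.range (r + 1), glCoeff α k < 0 := by
  rw [gl_sum]
  exact gl_neg (α - 1) (by linarith) (by linarith) r hr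
end

section
/- The matrix A_0^{anti} arising from anti-symmetric numerical boundary conditions admits the decomposition A_0^{anti} = S + B, where S is symmetric and B is nonzero only in its first and last rows and columns; in particular rank(A_0^{anti} − (A_0^{anti})^T) ≤ 4. -/
open Matrix

/-- The flip (anti-identity) matrix J of size N+1. -/
def flipM (N : ℕ) : Matrix (Fin (N + 1)) (Fin (N + 1)) ℝ :=
  Matrix.of fun j k => if (j : ℕ) + (k : ℕ) = N then 1 else 0

/-- Lower Hessenberg Toeplitz part T_L. -/
noncomputable def TLm (α : ℝ) (N : ℕ) : Matrix (Fin (N + 1)) (Fin (N + 1)) ℝ :=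
  Matrix.of fun j k =>
    if (-1 : ℤ) ≤ (j : ℤ) - (k : ℤ) then glCoeff α ((j : ℤ) - (k : ℤ) + 1).toNat else 0

/-- Hankel part H̃_L (first column zero). -/
noncomputable def HLm (α : ℝ) (N : ℕ) : Matrix (Fin (N + 1)) (Fin (N + 1)) ℝ :=
  Matrix.of fun j k => if (k : ℕ) = 0 then 0 else glCoeff α ((j : ℕ) + (k : ℕ) + 1)

/-- Rank-one correction R̃_L with the single entry g_0 in position (N, N-1). -/
noncomputable def RLm (α : ℝ) (N : ℕ) : Matrix (Fin (N + 1)) (Fin (N + 1)) ℝ :=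
  Matrix.of fun j k => if (j : ℕ) = N ∧ (k : ℕ) = N - 1 then glCoeff α 0 else 0

/-- A_L^{anti} = T_L − H̃_L − R̃_L. -/
noncomputable def ALanti (α : ℝ) (N : ℕ) : Matrix (Fin (N + 1)) (Fin (N + 1)) ℝ :=
  TLm α N - HLm α N - RLm α N

/-- A_R^{anti} = T_R − H̃_R − R̃_R with T_R = T_Lᵀ, H̃_R = J H̃_L J, R̃_R = J R̃_L J. -/
noncomputable def ARanti (α : ℝ) (N : ℕ) : Matrix (Fin (N + 1)) (Fin (N + 1)) ℝ :=
  (TLm α N)ᵀ - flipM N * HLm α N * flipM N - flipM N * RLm α N * flipM N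

/-- A_0^{anti} = (A_L^{anti} + A_R^{anti})/2. -/
noncomputable def A0anti (α : ℝ) (N : ℕ) : Matrix (Fin (N + 1)) (Fin (N + 1)) ℝ :=
  (1 / 2 : ℝ) • (ALanti α N + ARanti α N)

/-! The Toeplitz parts contribute `T_L + T_Lᵀ`, which is symmetric. The Hankel matrix `H̃_L` is
symmetric except for its zeroed first column, so its flip `J H̃_L J` is symmetric except for its
last column, and `R̃_L`, `J R̃_L J` live in the last and first row. Hence `A_0^{anti}` is symmetric
away from the first and last rows and columns, and its antisymmetric part, supported on two rows
and two columns, has rank at most `2 + 2`. -/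

namespace Matrix

theorem rank_add_le {m n K : Type*} [Fintype n] [Field K] (A B : Matrix m n K) :
    (A + B).rank ≤ A.rank + B.rank := by
  rw [rank, rank, rank, mulVecLin_add]
  exact (Submodule.finrank_mono (LinearMap.range_add_le _ _)).trans
    (Submodule.finrank_add_le_finrank_add_finrank _ _)

theorem rank_le_card_add_card_of_eq_zero {m n K : Type*} [Fintype m] [Fintype n] [Field K]
    (M : Matrix m n K) (r : Finset m) (c : Finset n)
    (h : ∀ i j, i ∉ r → j ∉ c → M i j = 0) : M.rank ≤ r.card + c.card := by
  classical
  set P : Matrix m n K := of fun i j => if i ∈ r then M i j else 0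
  set Q : Matrix m n K := of fun i j => if i ∈ r then 0 else M i j
  have hPQ : M = P + Q := by
    ext i j
    by_cases hi : i ∈ r <;> simp [P, Q, hi]
  have hP : P.rank ≤ r.card :=
    rank_le_card_of_support_subset P r <| Function.support_subset_iff'.2 fun i hi => by
      ext j; simp [P, Finset.mem_coe.not.1 hi]
  have hQ : Q.rank ≤ c.card := by
    rw [← rank_transpose]
    refine rank_le_card_of_support_subset _ c <| Function.support_subset_iff'.2 fun j hj => ?_
    ext i
    simpa [Q] using fun hi => h i j hi (Finset.mem_coe.not.1 hj)
  calc M.rank ≤ P.rank + Q.rank := hPQ ▸ rank_add_le P Q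
    _ ≤ r.card + c.card := add_le_add hP hQ

theorem exists_isSymm_add_vanishing_where_symm {n R : Type*} [CommRing R] [Invertible (2 : R)]
    (A : Matrix n n R) :
    ∃ S B : Matrix n n R, S.IsSymm ∧ (∀ j k, A j k = A k j → B j k = 0) ∧ A = S + B := by
  refine ⟨(⅟2 : R) • (A + Aᵀ), (⅟2 : R) • (A - Aᵀ), ?_, fun j k hjk => ?_, ?_⟩
  · rw [IsSymm, transpose_smul, transpose_add, transpose_transpose, add_comm]
  · rw [smul_apply, sub_apply, transpose_apply, hjk, sub_self, smul_zero]
  · rw [← smul_add, add_add_sub_cancel, ← two_smul R A, smul_smul, invOf_mul_self, one_smul]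

end Matrix

section

variable {N : ℕ}

theorem flipM_eq_submatrix_one_left :
    flipM N = (1 : Matrix (Fin (N + 1)) (Fin (N + 1)) ℝ).submatrix id Fin.revPerm := by
  ext j k
  simp only [flipM, of_apply, submatrix_apply, one_apply, Fin.revPerm_apply, Fin.ext_iff,
    Fin.val_rev, id]
  exact if_congr (by omega) rfl rfl

theorem flipM_eq_submatrix_one_right :
    flipM N = (1 : Matrix (Fin (N + 1)) (Fin (N + 1)) ℝ).submatrix Fin.revPerm id := by
  rw [flipM_eq_submatrix_one_left]
  ext j k
  simp only [submatrix_apply, one_apply, Fin.revPerm_apply, id, Fin.rev_eq_iff]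

theorem flipM_mul_mul_flipM (M : Matrix (Fin (N + 1)) (Fin (N + 1)) ℝ) :
    flipM N * M * flipM N = M.submatrix Fin.rev Fin.rev := by
  rw [flipM_eq_submatrix_one_right, mul_submatrix_one, ← flipM_eq_submatrix_one_right,
    flipM_eq_submatrix_one_left, one_submatrix_mul, submatrix_submatrix]
  rfl

theorem Fin.notMem_zero_last_of_one_le_of_le_sub_one {j : Fin (N + 1)} (h1 : 1 ≤ (j : ℕ))
    (h2 : (j : ℕ) ≤ N - 1) : j ∉ ({0, Fin.last N} : Finset (Fin (N + 1))) := by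
  simp only [Finset.mem_insert, Finset.mem_singleton, Fin.ext_iff, Fin.val_zero, Fin.val_last]
  omega

variable (α : ℝ)

theorem HLm_apply_comm {j k : Fin (N + 1)} (hj : j ≠ 0) (hk : k ≠ 0) :
    HLm α N j k = HLm α N k j := by
  simp [HLm, hj, hk, add_comm (j : ℕ)]

theorem RLm_apply_of_ne_last {j : Fin (N + 1)} (hj : j ≠ Fin.last N) (k : Fin (N + 1)) :
    RLm α N j k = 0 := by
  have hj' : (j : ℕ) ≠ N := fun h => hj (Fin.ext h)
  simp [RLm, hj']

theorem A0anti_apply_comm {j k : Fin (N + 1)} (hj : j ∉ ({0, Fin.last N} : Finset (Fin (N + 1))))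
    (hk : k ∉ ({0, Fin.last N} : Finset (Fin (N + 1)))) :
    A0anti α N j k = A0anti α N k j := by
  simp only [Finset.mem_insert, Finset.mem_singleton, not_or] at hj hk
  have rev_ne_zero {i : Fin (N + 1)} (hi : i ≠ Fin.last N) : i.rev ≠ 0 := by
    rwa [Fin.rev_ne_iff, Fin.rev_zero]
  have rev_ne_last {i : Fin (N + 1)} (hi : i ≠ 0) : i.rev ≠ Fin.last N := by
    rwa [Fin.rev_ne_iff, Fin.rev_last]
  simp only [A0anti, ALanti, ARanti, flipM_mul_mul_flipM, Matrix.smul_apply, Matrix.add_apply,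
    Matrix.sub_apply, transpose_apply, submatrix_apply]
  rw [HLm_apply_comm α hj.1 hk.1, HLm_apply_comm α (rev_ne_zero hj.2) (rev_ne_zero hk.2),
    RLm_apply_of_ne_last α hj.2, RLm_apply_of_ne_last α hk.2,
    RLm_apply_of_ne_last α (rev_ne_last hj.1), RLm_apply_of_ne_last α (rev_ne_last hk.1)]
  ring

end

theorem A0anti_decomposition_general (α : ℝ) (N : ℕ) :
    (∃ S B : Matrix (Fin (N + 1)) (Fin (N + 1)) ℝ,
      Sᵀ = S ∧
      (∀ j k : Fin (N + 1),
        1 ≤ (j : ℕ) → (j : ℕ) ≤ N - 1 → 1 ≤ (k : ℕ) → (k : ℕ) ≤ N - 1 → B j k = 0) ∧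
      A0anti α N = S + B) ∧
    (A0anti α N - (A0anti α N)ᵀ).rank ≤ 4 := by
  obtain ⟨S, B, hS, hB, hA⟩ := (A0anti α N).exists_isSymm_add_vanishing_where_symm
  refine ⟨⟨S, B, hS, fun j k hj1 hj2 hk1 hk2 => hB j k ?_, hA⟩, ?_⟩
  · exact A0anti_apply_comm α (Fin.notMem_zero_last_of_one_le_of_le_sub_one hj1 hj2)
      (Fin.notMem_zero_last_of_one_le_of_le_sub_one hk1 hk2)
  · refine (rank_le_card_add_card_of_eq_zero _ {0, Fin.last N} {0, Fin.last N}
      fun j k hj hk => ?_).trans (add_le_add Finset.card_le_two Finset.card_le_two)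
    rw [Matrix.sub_apply, transpose_apply, A0anti_apply_comm α hj hk, sub_self]

theorem A0anti_decomposition (α : ℝ) (hα1 : 1 < α) (hα2 : α < 2) (N : ℕ) :
    (∃ S B : Matrix (Fin (N + 1)) (Fin (N + 1)) ℝ,
      Sᵀ = S ∧
      (∀ j k : Fin (N + 1),
        1 ≤ (j : ℕ) → (j : ℕ) ≤ N - 1 → 1 ≤ (k : ℕ) → (k : ℕ) ≤ N - 1 → B j k = 0) ∧
      A0anti α N = S + B) ∧
    (A0anti α N - (A0anti α N)ᵀ).rank ≤ 4 :=
  A0anti_decomposition_general α N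
end
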